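/- For every k ≥ 2, if r is a residue with gcd(r, P_k) = 1 and gcd(r + 2, P_k) = 1, then among the p_{k+1} residues r + P_k·m (m = 0, 1, …, p_{k+1} − 1) modulo P_{k+1}, exactly p_{k+1} − 2 satisfy both gcd(r + P_k·m, P_{k+1}) = 1 and gcd(r + P_k·m + 2, P_{k+1}) = 1. (Each pair of twin rows of A_k gives rise to exactly p_{k+1} − 2 pairs of twin rows of A_{k+1}.) -/
import Mathlib


/-- The `i`-th prime number, 1-indexed: `nthPrime 1 = 2`, `nthPrime 2 = 3`, … -/
noncomputable def nthPrime (i : ℕ) : ℕ := Nat.nth Nat.Prime (i - 1)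

/-- The special factorial `P k = p₁ * p₂ * … * p_k`: the product of the first `k` primes. -/
noncomputable def specialFactorial (k : ℕ) : ℕ := ∏ i ∈ Finset.Icc 1 k, nthPrime i

/-- Each pair of twin rows of `A_k` gives rise to exactly `p_{k+1} - 2` pairs of twin
rows of `A_{k+1}`: for `k ≥ 2` and `r` with `gcd(r, P_k) = 1` and `gcd(r + 2, P_k) = 1`,
among the residues `r + P_k·m` for `m = 0, 1, …, p_{k+1} - 1`, exactly `p_{k+1} - 2`
satisfy both `gcd(r + P_k·m, P_{k+1}) = 1` and `gcd(r + P_k·m + 2, P_{k+1}) = 1`. -/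
theorem twin_rows_split :
    ∀ k : ℕ, 2 ≤ k → ∀ r : ℕ,
      Nat.gcd r (specialFactorial k) = 1 → Nat.gcd (r + 2) (specialFactorial k) = 1 →
      ((Finset.range (nthPrime (k + 1))).filter (fun m =>
          Nat.gcd (r + specialFactorial k * m) (specialFactorial (k + 1)) = 1 ∧
          Nat.gcd (r + specialFactorial k * m + 2) (specialFactorial (k + 1)) = 1)).card =
        nthPrime (k + 1) - 2 := by
  classical
  intro k hk r hr hr2
  set P := specialFactorial k with hP
  set p := nthPrime (k + 1) with hp
  have hinf : (setOf Nat.Prime).Infinite := Nat.infinite_setOf_prime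
  have hpp : p.Prime := by
    rw [hp, nthPrime]; exact Nat.prime_nth_prime _
  haveI : Fact p.Prime := ⟨hpp⟩
  have hsplit : specialFactorial (k + 1) = P * p := by
    rw [hP, hp, specialFactorial, specialFactorial,
      Finset.prod_Icc_succ_top (by omega : 1 ≤ k + 1)]
  -- P is coprime to p
  have hcop : Nat.Coprime P p := by
    rw [hP, specialFactorial]
    apply Nat.Coprime.prod_left
    intro i hi
    rw [Finset.mem_Icc] at hi
    have h1 : (nthPrime i).Prime := Nat.prime_nth_prime _
    rw [Nat.coprime_primes h1 hpp]
    rw [nthPrime, hp, nthPrime]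
    intro h
    have hlt : Nat.nth Nat.Prime (i - 1) < Nat.nth Nat.Prime (k + 1 - 1) :=
      (Nat.nth_lt_nth (p := Nat.Prime) hinf).mpr (by omega)
    omega
  have hPne : (P : ZMod p) ≠ 0 := by
    rw [Ne, ZMod.natCast_eq_zero_iff]
    exact fun h => Nat.Prime.not_dvd_one hpp (hcop ▸ Nat.dvd_gcd h dvd_rfl)
  have hp2 : 2 < p := by
    have h0 : Nat.nth Nat.Prime 0 = 2 := by
      have := Nat.nth_count (p := Nat.Prime) (n := 2) (by norm_num)
      simpa [show Nat.count Nat.Prime 2 = 0 by decide] using this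
    have hlt : Nat.nth Nat.Prime 0 < Nat.nth Nat.Prime (k + 1 - 1) :=
      (Nat.nth_lt_nth (p := Nat.Prime) hinf).mpr (by omega)
    rw [hp, nthPrime]; omega
  have h2ne : (2 : ZMod p) ≠ 0 := by
    have h : ((2 : ℕ) : ZMod p) ≠ 0 := by
      rw [Ne, ZMod.natCast_eq_zero_iff]
      exact fun h => absurd (Nat.le_of_dvd (by norm_num) h) (by omega)
    simpa using h
  -- rewrite the filter condition
  have hcond : ∀ m : ℕ,
      (Nat.gcd (r + P * m) (specialFactorial (k + 1)) = 1 ∧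
        Nat.gcd (r + P * m + 2) (specialFactorial (k + 1)) = 1) ↔
      (((r : ZMod p) + P * m ≠ 0) ∧ ((r : ZMod p) + P * m + 2 ≠ 0)) := by
    intro m
    rw [hsplit]
    have e1 : Nat.gcd (r + P * m) (P * p) = 1 ↔ ¬ (p ∣ (r + P * m)) := by
      rw [show (Nat.gcd (r + P * m) (P * p) = 1) ↔ Nat.Coprime (r + P * m) (P * p) from Iff.rfl,
        Nat.coprime_mul_iff_right]
      constructor
      · intro h hdvd
        exact Nat.Prime.not_dvd_one hpp (h.2 ▸ Nat.dvd_gcd hdvd dvd_rfl)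
      · intro h
        refine ⟨(Nat.coprime_add_mul_left_left r P m).mpr hr, ?_⟩
        exact (Nat.coprime_comm.mp ((Nat.Prime.coprime_iff_not_dvd hpp).mpr h))
    have e2 : Nat.gcd (r + P * m + 2) (P * p) = 1 ↔ ¬ (p ∣ (r + P * m + 2)) := by
      rw [show (Nat.gcd (r + P * m + 2) (P * p) = 1) ↔ Nat.Coprime (r + P * m + 2) (P * p) from Iff.rfl,
        Nat.coprime_mul_iff_right]
      constructor
      · intro h hdvd
        exact Nat.Prime.not_dvd_one hpp (h.2 ▸ Nat.dvd_gcd hdvd dvd_rfl)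
      · intro h
        refine ⟨?_, Nat.coprime_comm.mp ((Nat.Prime.coprime_iff_not_dvd hpp).mpr h)⟩
        have he : r + P * m + 2 = (r + 2) + P * m := by ring
        rw [he]
        exact (Nat.coprime_add_mul_left_left (r + 2) P m).mpr hr2
    rw [e1, e2, ← ZMod.natCast_eq_zero_iff, ← ZMod.natCast_eq_zero_iff]
    push_cast
    tauto
  rw [show ((Finset.range p).filter (fun m =>
          Nat.gcd (r + P * m) (specialFactorial (k + 1)) = 1 ∧
          Nat.gcd (r + P * m + 2) (specialFactorial (k + 1)) = 1)) =
        (Finset.range p).filter (fun m : ℕ =>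
          ((r : ZMod p) + P * (m : ℕ) ≠ 0) ∧ ((r : ZMod p) + P * (m : ℕ) + 2 ≠ 0)) from
    Finset.filter_congr (fun m _ => by simpa using hcond m)]
  -- biject with {x : ZMod p | x ≠ 0 ∧ x + 2 ≠ 0}
  have hcard : ((Finset.range p).filter (fun m : ℕ =>
        ((r : ZMod p) + P * (m : ℕ) ≠ 0) ∧ ((r : ZMod p) + P * (m : ℕ) + 2 ≠ 0))).card =
      (Finset.univ.filter (fun x : ZMod p => x ≠ 0 ∧ x + 2 ≠ 0)).card := by
    refine Finset.card_bij (fun (m : ℕ) (_ : m ∈ Finset.filter _ (Finset.range p)) => ((r : ZMod p) + P * (m : ℕ))) ?_ ?_ ?_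
    · intro m hm
      simp only [Finset.mem_filter, Finset.mem_range] at hm
      simp only [Finset.mem_filter, Finset.mem_univ, true_and]
      exact hm.2
    · intro m hm m' hm' h
      simp only [Finset.mem_filter, Finset.mem_range] at hm hm'
      have : (m : ZMod p) = m' := by
        have := mul_left_cancel₀ hPne (add_left_cancel h)
        exact this
      have := congrArg ZMod.val this
      rwa [ZMod.val_cast_of_lt hm.1, ZMod.val_cast_of_lt hm'.1] at this
    · intro x hx
      simp only [Finset.mem_filter, Finset.mem_univ, true_and] at hx
      refine ⟨((x - r) * (P : ZMod p)⁻¹).val, ?_, ?_⟩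
      · simp only [Finset.mem_filter, Finset.mem_range]
        have hval : ((((x - r) * (P : ZMod p)⁻¹).val : ℕ) : ZMod p)
            = (x - r) * (P : ZMod p)⁻¹ := ZMod.natCast_rightInverse _
        constructor
        · exact ZMod.val_lt _
        · rw [hval]
          have : (P : ZMod p) * ((x - r) * (P : ZMod p)⁻¹) = x - r := by
            field_simp
          rw [this]
          constructor
          · simpa using hx.1
          · have : (r : ZMod p) + (x - r) + 2 = x + 2 := by ring
            rw [this]; exact hx.2
      · have hval : ((((x - r) * (P : ZMod p)⁻¹).val : ℕ) : ZMod p)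
            = (x - r) * (P : ZMod p)⁻¹ := ZMod.natCast_rightInverse _
        show (r : ZMod p) + (P : ZMod p) * ((((x - r) * (P : ZMod p)⁻¹).val : ℕ) : ZMod p) = x
        rw [hval]
        have : (P : ZMod p) * ((x - r) * (P : ZMod p)⁻¹) = x - r := by
          field_simp
        rw [this]; ring
  rw [hcard]
  -- count in ZMod p
  have hne : (0 : ZMod p) ≠ -2 := by
    intro h
    apply h2ne
    rw [← neg_eq_zero, ← h]
  have hset : Finset.univ.filter (fun x : ZMod p => x ≠ 0 ∧ x + 2 ≠ 0) =
      Finset.univ \ {0, -2} := by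
    ext x
    simp only [Finset.mem_filter, Finset.mem_univ, true_and, Finset.mem_sdiff,
      Finset.mem_insert, Finset.mem_singleton]
    constructor
    · rintro ⟨h1, h2⟩
      push_neg
      exact ⟨h1, fun h => h2 (by rw [h]; ring)⟩
    · intro h
      push_neg at h
      exact ⟨h.1, fun hx => h.2 (by linear_combination hx)⟩
  rw [hset, Finset.card_sdiff_of_subset (Finset.subset_univ _)]
  have : ({0, -2} : Finset (ZMod p)).card = 2 := by
    rw [Finset.card_insert_of_notMem (by simpa using hne), Finset.card_singleton]
  rw [this, Finset.card_univ, ZMod.card]
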